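/- Define the Carlitz q-Fibonacci polynomials S_n(x,q)_0 by the recurrence S_n(x,q)_0 = x S_{n-1}(x,q)_0 + q^{n-2} S_{n-2}(x,q)_0 with S_0(x,q)_0 = 0 and S_1(x,q)_0 = 1. Then for all n ≥ 0, S_{n+1}(x,q)_0 = ∑_{j ≥ 0} qbinom(n-j, j)_q * q^{j^2} * x^{n-2j}. -/

import Mathlib

open Finset Polynomial

/-- The q-Pochhammer symbol `(a;q)_n = ∏_{i=1}^{n} (1 - a q^{i-1})`. -/
noncomputable def qPoch (a q : RatFunc ℚ) (n : ℕ) : RatFunc ℚ :=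
  ∏ i ∈ Finset.range n, (1 - a * q ^ i)

/-- The q-binomial coefficient `qbinom(n,m)_q = (q;q)_n / ((q;q)_{n-m} (q;q)_m)`
for `n ≥ m ≥ 0`, and `0` otherwise. -/
noncomputable def qbinom (q : RatFunc ℚ) (n m : ℤ) : RatFunc ℚ :=
  if 0 ≤ m ∧ m ≤ n then
    qPoch q q n.toNat / (qPoch q q (n - m).toNat * qPoch q q m.toNat)
  else 0

/-- The indeterminate `q`, realized as the generator of the field of rational functions. -/
noncomputable def qvar : RatFunc ℚ := RatFunc.X

/-- The Carlitz q-Fibonacci polynomials `S_n(x,q)₀`, with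
`S₀ = 0`, `S₁ = 1` and `S_n = x S_{n-1} + q^{n-2} S_{n-2}`, viewed as polynomials in `x`
over the field `ℚ(q)`. -/
noncomputable def qFib0 : ℕ → Polynomial (RatFunc ℚ)
  | 0 => 0
  | 1 => 1
  | (n + 2) => Polynomial.X * qFib0 (n + 1) + Polynomial.C (qvar ^ n) * qFib0 n

/-! Write the `j`-th summand of `S_{n+1}` with `n = a + 2j` as `qbinom(a+j, j) q^{j²} x^a`.
For `j ≥ 1` the recurrence `S_{n+3} = x S_{n+2} + q^{n+1} S_{n+1}` then holds summand by summand,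
and this is precisely the q-Pascal rule `qbinom(m+1,k+1) = qbinom(m,k+1) + q^{m-k} qbinom(m,k)`,
the factor `q^{n+1}` turning `q^{j²}` into `q^{m-k} q^{(j+1)²}`. The summands with `j = 0` are the
powers of `x`. -/

theorem qPoch_succ (a q : RatFunc ℚ) (n : ℕ) :
    qPoch a q (n + 1) = qPoch a q n * (1 - a * q ^ n) :=
  prod_range_succ _ n

theorem qPoch_zero (a q : RatFunc ℚ) : qPoch a q 0 = 1 :=
  prod_range_zero _

theorem not_isOfFinOrder_qvar : ¬IsOfFinOrder qvar := by
  rw [isOfFinOrder_iff_pow_eq_one]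
  rintro ⟨n, hn, hpow⟩
  have hX : (X : ℚ[X]) ^ n = 1 := by
    apply RatFunc.algebraMap_injective ℚ
    rwa [map_pow, map_one, RatFunc.algebraMap_X]
  simpa [hn.ne'] using congrArg natDegree hX

section qbinom

variable {q : RatFunc ℚ}

theorem qPoch_self_ne_zero (hq : ¬IsOfFinOrder q) (n : ℕ) : qPoch q q n ≠ 0 := by
  refine prod_ne_zero_iff.mpr fun i _ h => hq ?_
  rw [isOfFinOrder_iff_pow_eq_one]
  exact ⟨i + 1, i.succ_pos, by rw [pow_succ']; exact (sub_eq_zero.mp h).symm⟩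

theorem qbinom_of_lt {m k : ℤ} (h : m < k) : qbinom q m k = 0 :=
  if_neg (by omega)

theorem qbinom_natCast_of_le {m k : ℕ} (h : k ≤ m) :
    qbinom q m k = qPoch q q m / (qPoch q q (m - k) * qPoch q q k) := by
  rw [qbinom, if_pos ⟨k.cast_nonneg, by exact_mod_cast h⟩, ← Nat.cast_sub h]
  simp only [Int.toNat_natCast]

theorem qbinom_zero_right (hq : ¬IsOfFinOrder q) (m : ℕ) : qbinom q m 0 = 1 := by
  rw [← Nat.cast_zero, qbinom_natCast_of_le m.zero_le, Nat.sub_zero, qPoch_zero, mul_one,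
    div_self (qPoch_self_ne_zero hq m)]

theorem qbinom_self (hq : ¬IsOfFinOrder q) (m : ℕ) : qbinom q m m = 1 := by
  rw [qbinom_natCast_of_le le_rfl, Nat.sub_self, qPoch_zero, one_mul,
    div_self (qPoch_self_ne_zero hq m)]

/-- The q-Pascal rule, written with `m = a + b` so that no subtraction occurs. -/
theorem qbinom_succ_succ (hq : ¬IsOfFinOrder q) (a b : ℕ) :
    qbinom q ↑(a + b + 1) ↑(b + 1) =
      qbinom q ↑(a + b) ↑(b + 1) + q ^ a * qbinom q ↑(a + b) b := by
  rcases a with _ | c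
  · rw [zero_add, qbinom_self hq, qbinom_self hq, qbinom_of_lt (by omega), pow_zero, one_mul,
      zero_add]
  · rw [qbinom_natCast_of_le (by omega), qbinom_natCast_of_le (by omega),
      qbinom_natCast_of_le (by omega), show c + 1 + b + 1 - (b + 1) = c + 1 by omega,
      show c + 1 + b - (b + 1) = c by omega, show c + 1 + b - b = c + 1 by omega,
      show c + 1 + b = c + b + 1 by omega, qPoch_succ _ _ (c + b + 1), qPoch_succ _ _ c,
      qPoch_succ _ _ b]
    have := qPoch_self_ne_zero hq
    have hc := right_ne_zero_of_mul (qPoch_succ q q c ▸ this (c + 1))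
    have hb := right_ne_zero_of_mul (qPoch_succ q q b ▸ this (b + 1))
    field_simp [this]
    ring

end qbinom

section qFib

variable {q : RatFunc ℚ}

noncomputable def qFibTerm (q : RatFunc ℚ) (n j : ℕ) : (RatFunc ℚ)[X] :=
  C (qbinom q ((n : ℤ) - j) (j : ℤ) * q ^ (j ^ 2)) * X ^ (n - 2 * j)

/-- The right-hand side of the closed form for `S_{n+1}` (note the shift of index). -/
noncomputable def qFibSum (q : RatFunc ℚ) (n : ℕ) : (RatFunc ℚ)[X] :=
  ∑ j ∈ range (n + 1), qFibTerm q n j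

theorem qFibTerm_of_lt {n j : ℕ} (h : n < 2 * j) : qFibTerm q n j = 0 := by
  rw [qFibTerm, qbinom_of_lt (by omega), zero_mul, map_zero, zero_mul]

theorem qFibTerm_zero_right (hq : ¬IsOfFinOrder q) (n : ℕ) : qFibTerm q n 0 = X ^ n := by
  rw [qFibTerm, Nat.cast_zero, sub_zero, qbinom_zero_right hq]
  simp

theorem qFibTerm_add_two_mul (a j : ℕ) :
    qFibTerm q (a + 2 * j) j = C (qbinom q ↑(a + j) j * q ^ j ^ 2) * X ^ a := by
  rw [qFibTerm, Nat.add_sub_cancel, show ((a + 2 * j : ℕ) : ℤ) - j = ((a + j : ℕ) : ℤ) by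
    push_cast; ring]

theorem X_mul_qFibTerm (a j : ℕ) :
    X * qFibTerm q (a + 2 * j + 1) (j + 1) =
      C (qbinom q ↑(a + j) ↑(j + 1) * q ^ (j + 1) ^ 2) * X ^ a := by
  rcases a with _ | c
  · rw [qFibTerm_of_lt (by omega), qbinom_of_lt (by omega)]
    simp
  · rw [show c + 1 + 2 * j + 1 = c + 2 * (j + 1) by ring, qFibTerm_add_two_mul,
      show c + (j + 1) = c + 1 + j by ring]
    ring

theorem qFibTerm_add_two_succ (hq : ¬IsOfFinOrder q) (n j : ℕ) :
    qFibTerm q (n + 2) (j + 1) =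
      X * qFibTerm q (n + 1) (j + 1) + C (q ^ (n + 1)) * qFibTerm q n j := by
  obtain hn | ⟨a, rfl⟩ : n < 2 * j ∨ ∃ a, n = a + 2 * j :=
    (lt_or_ge n (2 * j)).imp_right fun h => ⟨n - 2 * j, by omega⟩
  · rw [qFibTerm_of_lt (by omega), qFibTerm_of_lt (by omega), qFibTerm_of_lt hn]
    simp
  · rw [X_mul_qFibTerm, qFibTerm_add_two_mul, show a + 2 * j + 2 = a + 2 * (j + 1) by ring,
      qFibTerm_add_two_mul, show a + (j + 1) = a + j + 1 by ring, qbinom_succ_succ hq]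
    simp only [map_add, map_mul, map_pow]
    ring

theorem sum_range_qFibTerm {n N : ℕ} (h : n + 1 ≤ N) :
    ∑ j ∈ range N, qFibTerm q n j = qFibSum q n := by
  induction N, h using Nat.le_induction with
  | base => rfl
  | succ N hN ih => rw [sum_range_succ, ih, qFibTerm_of_lt (by omega), add_zero]

theorem qFibSum_add_two (hq : ¬IsOfFinOrder q) (n : ℕ) :
    qFibSum q (n + 2) = X * qFibSum q (n + 1) + C (q ^ (n + 1)) * qFibSum q n := calc
  qFibSum q (n + 2) = ∑ j ∈ range (n + 2), qFibTerm q (n + 2) (j + 1) + qFibTerm q (n + 2) 0 :=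
    sum_range_succ' _ _
  _ = X * (∑ j ∈ range (n + 2), qFibTerm q (n + 1) (j + 1) + qFibTerm q (n + 1) 0) +
        C (q ^ (n + 1)) * ∑ j ∈ range (n + 2), qFibTerm q n j := by
    simp only [qFibTerm_add_two_succ hq, sum_add_distrib, ← mul_sum, qFibTerm_zero_right hq]
    ring
  _ = X * qFibSum q (n + 1) + C (q ^ (n + 1)) * qFibSum q n := by
    rw [← sum_range_succ', sum_range_qFibTerm (by omega), sum_range_qFibTerm (by omega)]

end qFib

/-- `S_{n+1}(x,q)₀ = ∑_{j ≥ 0} qbinom(n-j,j)_q q^{j²} x^{n-2j}`. -/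
theorem qFib0_closed_form (n : ℕ) :
    qFib0 (n + 1) =
      ∑ j ∈ Finset.range (n + 1),
        Polynomial.C (qbinom qvar ((n : ℤ) - j) (j : ℤ) * qvar ^ (j ^ 2)) *
          Polynomial.X ^ (n - 2 * j) := by
  change qFib0 (n + 1) = qFibSum qvar n
  induction n using Nat.twoStepInduction with
  | zero => rw [qFibSum, sum_range_one, qFibTerm_zero_right not_isOfFinOrder_qvar]; rfl
  | one =>
    rw [qFibSum, sum_range_succ, sum_range_one, qFibTerm_zero_right not_isOfFinOrder_qvar,
      qFibTerm_of_lt (by omega)]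
    simp [qFib0]
  | more n ih₁ ih₂ =>
    rw [qFib0, ih₁, ih₂, qFibSum_add_two not_isOfFinOrder_qvar]
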